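/- The infinite Fibonacci word contains no fourth power, i.e., there is no nonempty word w with wwww a factor of 𝔽. -/
import Mathlib


/-- Finite Fibonacci words: `fibF 0 = a`, `fibF 1 = ab`,
`fibF (m+2) = fibF (m+1) ++ fibF m`, with letters `a = false`, `b = true`.
Each `fibF m` is a prefix of the next, so a word is a factor of the infinite
Fibonacci word `𝔽` iff it is a factor (infix) of some `fibF m`. -/
def fibF : ℕ → List Bool
  | 0 => [false]
  | 1 => [false, true]
  | n + 2 => fibF (n + 1) ++ fibF n

/-- A word is a factor of the infinite Fibonacci word. -/
def IsFactorF (w : List Bool) : Prop := ∃ m, w <:+: fibF m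

/-- The prefix `𝔽[1,n]` of the infinite Fibonacci word of length `n`
(`fibF n` has length `fib (n+2) ≥ n`). -/
def fibPrefix (n : ℕ) : List Bool := (fibF n).take n

namespace FW

lemma fibF_add_two (n : ℕ) : fibF (n+2) = fibF (n+1) ++ fibF n := rfl

lemma lt_length : ∀ n, n < (fibF n).length
  | 0 => by simp [fibF]
  | 1 => by simp [fibF]
  | n+2 => by
      have h1 := lt_length (n+1)
      have h0 := lt_length n
      rw [fibF_add_two, List.length_append]
      omega

lemma prefix_succ : ∀ n, fibF n <+: fibF (n+1)
  | 0 => ⟨[true], rfl⟩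
  | 1 => ⟨fibF 0, rfl⟩
  | n+2 => ⟨fibF (n+1), rfl⟩

lemma prefix_mono {m n : ℕ} (h : m ≤ n) : fibF m <+: fibF n := by
  induction n, h using Nat.le_induction with
  | base => exact List.prefix_refl _
  | succ n _ ih => exact ih.trans (prefix_succ n)

def F (n : ℕ) : Bool := (fibF n).getD n false

lemma prefix_getD {l₁ l₂ : List Bool} (h : l₁ <+: l₂) {i : ℕ} (hi : i < l₁.length) :
    l₂.getD i false = l₁.getD i false := by
  obtain ⟨t, rfl⟩ := h
  rw [List.getD_append _ _ _ _ hi]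

lemma F_eq {K k : ℕ} (h : k < (fibF K).length) : (fibF K).getD k false = F k := by
  rcases le_total k K with hk | hk
  · exact prefix_getD (prefix_mono hk) (lt_length k)
  · exact (prefix_getD (prefix_mono hk) h).symm

lemma F0 : F 0 = false := rfl

lemma length_fibPrefix (n : ℕ) : (fibPrefix n).length = n := by
  simp [fibPrefix]
  exact (lt_length n).le

lemma fibPrefix_prefix (n K : ℕ) (h : n ≤ K) : fibPrefix n <+: fibF K :=
  (List.take_prefix _ _).trans (prefix_mono h)

lemma prefix_eq_of_length {l₁ l₂ l : List Bool} (h₁ : l₁ <+: l) (h₂ : l₂ <+: l)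
    (h : l₁.length = l₂.length) : l₁ = l₂ := by
  obtain ⟨t₁, rfl⟩ := h₁
  obtain ⟨t₂, ht⟩ := h₂
  exact (List.append_inj ht h.symm).1.symm

lemma take_fibF {n K : ℕ} (h : n ≤ K) : (fibF K).take n = fibPrefix n := by
  apply prefix_eq_of_length (List.take_prefix _ _) (fibPrefix_prefix n K h)
  rw [length_fibPrefix, List.length_take]
  have := lt_length n
  have := (prefix_mono h).length_le
  omega

lemma fibPrefix_getD {n j : ℕ} (h : j < n) : (fibPrefix n).getD j false = F j := by
  have h1 : (fibF n).getD j false = (fibPrefix n).getD j false :=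
    prefix_getD (l₁ := fibPrefix n) (fibPrefix_prefix n n le_rfl)
      (by rw [length_fibPrefix]; exact h)
  rw [← h1]
  exact F_eq (lt_of_lt_of_le h (lt_length n).le)

lemma fibPrefix_succ (n : ℕ) : fibPrefix (n+1) = fibPrefix n ++ [F n] := by
  have hn : n < (fibF (n+1)).length := lt_of_lt_of_le (lt_length n) (prefix_succ n).length_le
  show (fibF (n+1)).take (n+1) = _
  rw [List.take_succ, take_fibF (Nat.le_succ n)]
  congr 1
  rw [List.getElem?_eq_getElem hn]
  simp only [Option.toList_some]
  congr 1
  rw [← List.getD_eq_getElem _ false hn]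
  exact F_eq hn


def blk (b : Bool) : List Bool := cond b [false] [false, true]

def sigma : List Bool → List Bool
  | [] => []
  | b :: l => blk b ++ sigma l

lemma sigma_append : ∀ l r : List Bool, sigma (l ++ r) = sigma l ++ sigma r
  | [], r => rfl
  | b :: l, r => by
      show blk b ++ sigma (l ++ r) = (blk b ++ sigma l) ++ sigma r
      rw [sigma_append l r, List.append_assoc]

lemma sigma_fibF : ∀ n, sigma (fibF n) = fibF (n+1)
  | 0 => rfl
  | 1 => rfl
  | n+2 => by
      rw [fibF_add_two, sigma_append, sigma_fibF (n+1), sigma_fibF n]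
      exact (fibF_add_two (n+1)).symm

def cnt : ℕ → ℕ
  | 0 => 0
  | n+1 => cnt n + cond (F n) 0 1

def D (n : ℕ) : ℕ := n + cnt n

lemma cnt_succ_true {n : ℕ} (h : F n = true) : cnt (n+1) = cnt n := by
  show cnt n + cond (F n) 0 1 = cnt n
  rw [h]; rfl

lemma cnt_succ_false {n : ℕ} (h : F n = false) : cnt (n+1) = cnt n + 1 := by
  show cnt n + cond (F n) 0 1 = cnt n + 1
  rw [h]; rfl

lemma D_succ_true {n : ℕ} (h : F n = true) : D (n+1) = D n + 1 := by
  simp only [D, cnt_succ_true h]; omega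

lemma D_succ_false {n : ℕ} (h : F n = false) : D (n+1) = D n + 2 := by
  simp only [D, cnt_succ_false h]; omega

lemma D_succ_le (n : ℕ) : D n + 1 ≤ D (n+1) := by
  cases hb : F n
  · rw [D_succ_false hb]; omega
  · rw [D_succ_true hb]

lemma D_succ_ge (n : ℕ) : D (n+1) ≤ D n + 2 := by
  cases hb : F n
  · rw [D_succ_false hb]
  · rw [D_succ_true hb]; omega

lemma F_true_of_D1 {n : ℕ} (h : D (n+1) = D n + 1) : F n = true := by
  cases hb : F n
  · rw [D_succ_false hb] at h; omega
  · rfl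

lemma F_false_of_D2 {n : ℕ} (h : D (n+1) = D n + 2) : F n = false := by
  cases hb : F n
  · rfl
  · rw [D_succ_true hb] at h; omega

lemma D_le_add (n : ℕ) : ∀ k, D n + k ≤ D (n+k)
  | 0 => le_refl _
  | k+1 => by
      have h := D_le_add n k
      have h2 := D_succ_le (n+k)
      have e : n + (k+1) = (n+k)+1 := by omega
      rw [e]
      omega

lemma D_mono {a b : ℕ} (h : a ≤ b) : D a ≤ D b := by
  have h2 : a + (b - a) = b := by omega
  have := D_le_add a (b - a)
  rw [h2] at this
  omega

lemma D0 : D 0 = 0 := rfl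

lemma sigma_prefix_mono {l₁ l₂ : List Bool} (h : l₁ <+: l₂) : sigma l₁ <+: sigma l₂ := by
  obtain ⟨t, rfl⟩ := h
  rw [sigma_append]
  exact ⟨sigma t, rfl⟩

lemma length_blk (b : Bool) : (blk b).length = cond b 1 2 := by cases b <;> rfl

lemma length_sigma_fibPrefix : ∀ n, (sigma (fibPrefix n)).length = D n
  | 0 => by simp [fibPrefix, fibF, sigma, D, cnt]
  | n+1 => by
      rw [fibPrefix_succ, sigma_append, List.length_append, length_sigma_fibPrefix n]
      cases hb : F n
      · rw [D_succ_false hb]; simp [sigma, blk]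
      · rw [D_succ_true hb]; simp [sigma, blk]

lemma sigma_fibPrefix (n : ℕ) : sigma (fibPrefix n) = fibPrefix (D n) := by
  set M := n + 1 + D n with hM
  have h1 : sigma (fibPrefix n) <+: fibF M := by
    have := sigma_prefix_mono (fibPrefix_prefix n n le_rfl)
    rw [sigma_fibF] at this
    exact this.trans (prefix_mono (by omega))
  have h2 : fibPrefix (D n) <+: fibF M := fibPrefix_prefix _ _ (by omega)
  exact prefix_eq_of_length h1 h2
    (by rw [length_sigma_fibPrefix, length_fibPrefix])

lemma fibPrefix_D_succ (n : ℕ) : fibPrefix (D (n+1)) = fibPrefix (D n) ++ blk (F n) := by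
  rw [← sigma_fibPrefix, ← sigma_fibPrefix, fibPrefix_succ, sigma_append]
  simp [sigma]

lemma F_D (n : ℕ) : F (D n) = false := by
  have h : D n < D (n+1) := D_succ_le n
  have h1 : F (D n) = (fibPrefix (D (n+1))).getD (D n) false := (fibPrefix_getD h).symm
  rw [fibPrefix_D_succ] at h1
  rw [List.getD_append_right _ _ _ _ (by rw [length_fibPrefix])] at h1
  rw [length_fibPrefix, Nat.sub_self] at h1
  cases hb : F n <;> rw [hb] at h1 <;> simpa [blk] using h1

lemma F_D1 (n : ℕ) : F (D n + 1) = ! F n := by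
  cases hb : F n
  · have h2 : D (n+1) = D n + 2 := D_succ_false hb
    have hlt : D n + 1 < D (n+1) := by omega
    have h1 : F (D n + 1) = (fibPrefix (D (n+1))).getD (D n + 1) false :=
      (fibPrefix_getD hlt).symm
    rw [fibPrefix_D_succ, hb] at h1
    rw [List.getD_append_right _ _ _ _ (by rw [length_fibPrefix]; omega)] at h1
    rw [length_fibPrefix] at h1
    have e : D n + 1 - D n = 1 := by omega
    rw [e] at h1
    simpa [blk] using h1
  · have h2 : D (n+1) = D n + 1 := D_succ_true hb
    rw [← h2, F_D]
    rfl

lemma F_of_D1 (n : ℕ) : F n = ! F (D n + 1) := by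
  rw [F_D1, Bool.not_not]

lemma cnt_D : ∀ n, cnt (D n) = n
  | 0 => rfl
  | n+1 => by
      cases hb : F n
      · have h2 : D (n+1) = D n + 2 := D_succ_false hb
        have e1 : cnt (D n + 1) = cnt (D n) + 1 := cnt_succ_false (F_D n)
        have e2 : cnt (D n + 2) = cnt (D n + 1) := by
          have e : D n + 2 = (D n + 1) + 1 := rfl
          rw [e]
          apply cnt_succ_true
          rw [F_D1, hb]; rfl
        rw [h2, e2, e1, cnt_D n]
      · have h2 : D (n+1) = D n + 1 := D_succ_true hb
        rw [h2, cnt_succ_false (F_D n), cnt_D n]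

lemma loc : ∀ m, ∃ n, m = D n ∨ (m = D n + 1 ∧ F n = false)
  | 0 => ⟨0, Or.inl rfl⟩
  | m+1 => by
      obtain ⟨n, h | ⟨h1, h2⟩⟩ := loc m
      · cases hb : F n
        · exact ⟨n, Or.inr ⟨by omega, hb⟩⟩
        · refine ⟨n+1, Or.inl ?_⟩
          rw [D_succ_true hb, h]
      · refine ⟨n+1, Or.inl ?_⟩
        rw [D_succ_false h2]
        omega

lemma D_cnt {m : ℕ} (h : F m = false) : D (cnt m) = m := by
  obtain ⟨n, hn | ⟨h1, h2⟩⟩ := loc m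
  · rw [hn, cnt_D]
  · exfalso
    rw [h1, F_D1, h2] at h
    simp at h

lemma nobb {m : ℕ} (h1 : F m = true) (h2 : F (m+1) = true) : False := by
  obtain ⟨n, hn | ⟨ha, hb⟩⟩ := loc m
  · rw [hn, F_D] at h1; simp at h1
  · have hD : D (n+1) = m + 1 := by rw [D_succ_false hb]; omega
    rw [← hD, F_D] at h2; simp at h2

lemma not_b_succ {m : ℕ} (h : F (m+1) = true) : F m = false := by
  cases hb : F m
  · rfl
  · exact absurd (nobb hb h) (by simp)

lemma not_b_of_b {m : ℕ} (h : F m = true) : F (m+1) = false := by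
  cases hb : F (m+1)
  · rfl
  · exact absurd (nobb h hb) (by simp)

lemma noaaa {m : ℕ} (h0 : F m = false) (h1 : F (m+1) = false) (h2 : F (m+2) = false) :
    False := by
  set c := cnt m with hc
  have hd0 : D c = m := D_cnt h0
  have e1 : cnt (m+1) = c + 1 := cnt_succ_false h0
  have hd1 : D (c+1) = m+1 := by rw [← e1]; exact D_cnt h1
  have e2 : cnt (m+2) = c + 2 := by
    have e : m + 2 = (m+1) + 1 := rfl
    rw [e, cnt_succ_false h1, e1]
  have hd2 : D (c+2) = m+2 := by rw [← e2]; exact D_cnt h2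
  have f1 : F c = true := F_true_of_D1 (by omega)
  have f2 : F (c+1) = true := F_true_of_D1 (by
    rw [show c+1+1 = c+2 from rfl, hd2, hd1])
  exact nobb f1 f2

lemma no_ababab {m : ℕ} (h0 : F m = false) (h1 : F (m+1) = true)
    (h3 : F (m+3) = true) (h5 : F (m+5) = true) : False := by
  set c := cnt m with hc
  have hd0 : D c = m := D_cnt h0
  have f0 : F c = false := by
    have h := F_of_D1 c
    rw [hd0, h1] at h
    simpa using h
  have hd1 : D (c+1) = m + 2 := by rw [D_succ_false f0, hd0]
  have f1 : F (c+1) = false := by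
    have h := F_of_D1 (c+1)
    rw [hd1] at h
    have e : m+2+1 = m+3 := rfl
    rw [e, h3] at h
    simpa using h
  have hd2 : D (c+2) = m + 4 := by rw [D_succ_false f1, hd1]
  have f2 : F (c+2) = false := by
    have h := F_of_D1 (c+2)
    rw [hd2] at h
    have e : m+4+1 = m+5 := rfl
    rw [e, h5] at h
    simpa using h
  exact noaaa f0 f1 f2

lemma cnt_add_le (x : ℕ) : ∀ L, cnt (x + L) ≤ cnt x + L
  | 0 => le_refl _
  | L+1 => by
      have h := cnt_add_le x L
      have e : x + (L+1) = (x+L) + 1 := rfl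
      rw [e]
      cases hb : F (x+L)
      · rw [cnt_succ_false hb]; omega
      · rw [cnt_succ_true hb]; omega

lemma cnt_mono {a b : ℕ} (h : a ≤ b) : cnt a ≤ cnt b := by
  induction b, h using Nat.le_induction with
  | base => exact le_refl _
  | succ n _ ih =>
      cases hb : F n
      · rw [cnt_succ_false hb]; omega
      · rw [cnt_succ_true hb]; omega

lemma cnt_succ_le (n : ℕ) : cnt (n+1) ≤ cnt n + 1 := by
  cases hb : F n
  · rw [cnt_succ_false hb]
  · rw [cnt_succ_true hb]; omega

lemma cnt_shift (x p : ℕ) : ∀ L, (∀ j, j < L → F (x + p + j) = F (x + j)) →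
    cnt (x + p + L) + cnt x = cnt (x + L) + cnt (x + p)
  | 0, _ => by simp; omega
  | L+1, h => by
      have ih := cnt_shift x p L (fun j hj => h j (by omega))
      have e1 : x + p + (L+1) = (x+p+L) + 1 := by omega
      have e2 : x + (L+1) = (x+L) + 1 := by omega
      rw [e1, e2]
      cases hb : F (x + L)
      · rw [cnt_succ_false hb, cnt_succ_false (by rw [h L (by omega)]; exact hb)]
        omega
      · rw [cnt_succ_true hb, cnt_succ_true (by rw [h L (by omega)]; exact hb)]
        omega

lemma cnt_all (x : ℕ) : ∀ L, cnt (x + L) = cnt x + L → ∀ j, j < L → F (x + j) = false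
  | 0, _, j, hj => by omega
  | L+1, h, j, hj => by
      have hle := cnt_add_le x L
      have e : x + (L+1) = (x+L)+1 := rfl
      rw [e] at h
      have hc := cnt_succ_le (x+L)
      cases hb : F (x+L)
      · rw [cnt_succ_false hb] at h
        have hLeq : cnt (x+L) = cnt x + L := by omega
        rcases Nat.lt_or_ge j L with hjL | hjL
        · exact cnt_all x L hLeq j hjL
        · have : j = L := by omega
          rw [this]; exact hb
      · exfalso
        rw [cnt_succ_true hb] at h
        omega


lemma engine {p s n0 q T : ℕ}
    (hD0 : D n0 = s) (hDq : D (n0+q) = s+p)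
    (hcore : ∀ k, k ≤ T → F (s+k+p) = F (s+k)) :
    ∀ R, (∀ j, j < R → D (n0+j) + 1 ≤ s + T) →
      (∀ r, r ≤ R → D (n0+q+r) = D (n0+r) + p) ∧ (∀ j, j < R → F (n0+q+j) = F (n0+j)) := by
  intro R
  induction R with
  | zero =>
      intro _
      refine ⟨?_, fun j hj => absurd hj (by omega)⟩
      intro r hr
      have hr0 : r = 0 := by omega
      subst hr0
      rw [show n0+q+0 = n0+q from rfl, show n0+0 = n0 from rfl, hDq, hD0]
  | succ R ih =>
      intro hb
      obtain ⟨hinv, hpair⟩ := ih (fun j hj => hb j (by omega))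
      have hDR : D (n0+q+R) = D (n0+R) + p := hinv R le_rfl
      have hbR : D (n0+R) + 1 ≤ s + T := hb R (by omega)
      have hsle : s ≤ D (n0+R) := by
        have h1 := D_le_add n0 R
        omega
      have hcoreR : F ((D (n0+R) + 1) + p) = F (D (n0+R) + 1) := by
        have hk : D (n0+R) + 1 - s ≤ T := by omega
        have h2 := hcore (D (n0+R) + 1 - s) hk
        rw [show s + (D (n0+R) + 1 - s) = D (n0+R) + 1 by omega] at h2
        exact h2
      have hFR : F (n0+q+R) = F (n0+R) := by
        rw [F_of_D1 (n0+q+R), F_of_D1 (n0+R), hDR]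
        rw [show D (n0+R) + p + 1 = (D (n0+R) + 1) + p by omega, hcoreR]
      refine ⟨?_, ?_⟩
      · intro r hr
        rcases Nat.lt_or_ge r (R+1) with h | h
        · exact hinv r (by omega)
        · have hrR : r = R + 1 := by omega
          subst hrR
          have e1 : D (n0+q+(R+1)) = D (n0+q+R) + cond (F (n0+q+R)) 1 2 := by
            rw [show n0+q+(R+1) = (n0+q+R)+1 from by omega]
            cases hc : F (n0+q+R)
            · rw [D_succ_false hc]; rfl
            · rw [D_succ_true hc]; rfl
          have e2 : D (n0+(R+1)) = D (n0+R) + cond (F (n0+R)) 1 2 := by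
            rw [show n0+(R+1) = (n0+R)+1 from by omega]
            cases hc : F (n0+R)
            · rw [D_succ_false hc]; rfl
            · rw [D_succ_true hc]; rfl
          rw [e1, e2, hFR, hDR]
          omega
      · intro j hj
        rcases Nat.lt_or_ge j R with h | h
        · exact hpair j h
        · have hjR : j = R := by omega
          subst hjR
          exact hFR

lemma package {p s : ℕ} (hp : 3 ≤ p) (hs : F s = false)
    (hcore : ∀ k, k ≤ 3*p-2 → F (s+k+p) = F (s+k)) :
    ∃ n0 q, 1 ≤ q ∧ q < p ∧ D n0 = s ∧ D (n0+q) = s+p ∧ D (n0+3*q) = s+3*p ∧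
      D (n0+(3*q-2)) + 3 ≤ s+3*p := by
  have hsp : F (s+p) = false := by
    have h := hcore 0 (by omega)
    rw [show s+0+p = s+p from by omega, show s+0 = s from rfl] at h
    rw [h, hs]
  have hs2p : F (s+2*p) = false := by
    have h := hcore p (by omega)
    rw [show s+p+p = s+2*p from by omega] at h
    rw [h, hsp]
  have hs3p : F (s+3*p) = false := by
    have h := hcore (2*p) (by omega)
    rw [show s+2*p+p = s+3*p from by omega] at h
    rw [h, hs2p]
  have hw1 : cnt (s+p+p) + cnt s = cnt (s+p) + cnt (s+p) := by
    apply cnt_shift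
    intro j hj
    have h := hcore j (by omega)
    rw [show s+j+p = s+p+j from by omega] at h
    exact h
  have hw2 : cnt (s+p+p+p) + cnt (s+p) = cnt (s+p+p) + cnt (s+p+p) := by
    apply cnt_shift
    intro j hj
    have h := hcore (p+j) (by omega)
    rw [show s+(p+j)+p = s+p+p+j from by omega,
        show s+(p+j) = s+p+j from by omega] at h
    exact h
  set n0 := cnt s with hn0
  have hmono : cnt s ≤ cnt (s+p) := cnt_mono (by omega)
  set q := cnt (s+p) - n0 with hqdef
  have hq_add : n0 + q = cnt (s+p) := by omega
  have hq1 : 1 ≤ q := by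
    have h1 : cnt (s+1) = cnt s + 1 := cnt_succ_false hs
    have h2 : cnt (s+1) ≤ cnt (s+p) := cnt_mono (by omega)
    omega
  have hD0 : D n0 = s := D_cnt hs
  have hDq : D (n0+q) = s+p := by rw [hq_add]; exact D_cnt hsp
  have c2 : cnt (s+2*p) = n0 + 2*q := by
    rw [show s+p+p = s+2*p from by omega] at hw1
    omega
  have c3 : cnt (s+3*p) = n0 + 3*q := by
    rw [show s+p+p+p = s+3*p from by omega, show s+p+p = s+2*p from by omega] at hw2
    omega
  have hD3q : D (n0+3*q) = s+3*p := by rw [← c3]; exact D_cnt hs3p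
  have hqp : q < p := by
    have hle : cnt (s+p) ≤ cnt s + p := cnt_add_le s p
    rcases Nat.lt_or_ge q p with h | h
    · exact h
    · exfalso
      have hqe : cnt (s+p) = cnt s + p := by omega
      have h1 := cnt_all s p hqe 1 (by omega)
      have h2 := cnt_all s p hqe 2 (by omega)
      exact noaaa hs h1 h2
  refine ⟨n0, q, hq1, hqp, hD0, hDq, hD3q, ?_⟩
  set a2 := n0 + (3*q-2) with ha2
  have ea : a2 + 2 = n0 + 3*q := by omega
  have hD2 : D (a2+2) = s + 3*p := by rw [ea, hD3q]
  have eup : D (a2+2) = D ((a2+1)+1) := by rw [show (a2+1)+1 = a2+2 from rfl]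
  cases hx : F a2 <;> cases hy : F (a2+1)
  · have u1 := D_succ_false hx
    have u2 := D_succ_false hy
    rw [eup, u2, u1] at hD2
    omega
  · have u1 := D_succ_false hx
    have u2 := D_succ_true hy
    rw [eup, u2, u1] at hD2
    omega
  · have u1 := D_succ_true hx
    have u2 := D_succ_false hy
    rw [eup, u2, u1] at hD2
    omega
  · exact absurd (nobb hx hy) (by simp)

lemma blockTopB {p q s n0 : ℕ} (hp : 1 ≤ p) (hq : 1 ≤ q)
    (hD3 : D (n0+3*q) = s+3*p) (hb : F (s+(3*p-1)) = true) :
    D (n0+(3*q-1)) = s+(3*p-2) ∧ F (n0+(3*q-1)) = false := by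
  have hab : F (s+(3*p-2)) = false := by
    apply not_b_succ
    rw [show s+(3*p-2)+1 = s+(3*p-1) from by omega]
    exact hb
  have hcnt3 : cnt (s+3*p) = n0+3*q := by rw [← hD3, cnt_D]
  have e1 : cnt (s+(3*p-1)) = cnt (s+(3*p-2)) + 1 := by
    have h := cnt_succ_false hab
    rw [show s+(3*p-2)+1 = s+(3*p-1) from by omega] at h
    exact h
  have e2 : cnt (s+3*p) = cnt (s+(3*p-1)) := by
    have h := cnt_succ_true hb
    rw [show s+(3*p-1)+1 = s+3*p from by omega] at h
    exact h
  have hcnt : cnt (s+(3*p-2)) = n0+(3*q-1) := by omega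
  have hDt : D (n0+(3*q-1)) = s+(3*p-2) := by rw [← hcnt]; exact D_cnt hab
  have hD1 : D ((n0+(3*q-1))+1) = D (n0+(3*q-1)) + 2 := by
    rw [show (n0+(3*q-1))+1 = n0+3*q from by omega, hD3, hDt]
    omega
  exact ⟨hDt, F_false_of_D2 hD1⟩

lemma blockTopA {p q s n0 : ℕ} (hp : 1 ≤ p) (hq : 1 ≤ q)
    (hD3 : D (n0+3*q) = s+3*p) (ha : F (s+(3*p-1)) = false) :
    D (n0+(3*q-1)) = s+(3*p-1) ∧ F (n0+(3*q-1)) = true := by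
  have hcnt3 : cnt (s+3*p) = n0+3*q := by rw [← hD3, cnt_D]
  have e2 : cnt (s+3*p) = cnt (s+(3*p-1)) + 1 := by
    have h := cnt_succ_false ha
    rw [show s+(3*p-1)+1 = s+3*p from by omega] at h
    exact h
  have hcnt : cnt (s+(3*p-1)) = n0+(3*q-1) := by omega
  have hDt : D (n0+(3*q-1)) = s+(3*p-1) := by rw [← hcnt]; exact D_cnt ha
  have hD1 : D ((n0+(3*q-1))+1) = D (n0+(3*q-1)) + 1 := by
    rw [show (n0+(3*q-1))+1 = n0+3*q from by omega, hD3, hDt]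
    omega
  exact ⟨hDt, F_true_of_D1 hD1⟩

lemma F_s1 {s n0 : ℕ} (hD0 : D n0 = s) (hb : F n0 = true) : F (s+1) = false := by
  have h := D_succ_true hb
  rw [hD0] at h
  rw [← h]
  exact F_D (n0+1)

lemma n0_pos {n0 : ℕ} (hb : F n0 = true) : 1 ≤ n0 := by
  rcases Nat.eq_zero_or_pos n0 with h | h
  · rw [h, F0] at hb
    exact absurd hb (by simp)
  · exact h


def Vtwo (p s : ℕ) : Prop := F s = false ∧ ∀ k, k < 3*p → F (s+k+p) = F (s+k)
def Vthree (p t : ℕ) : Prop := F (t+1) = false ∧ ∀ k, k < 3*p → F (t+k+p) = F (t+k)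
def Ua (p s : ℕ) : Prop :=
  F s = false ∧ (∀ k, k < 3*p-1 → F (s+k+p) = F (s+k)) ∧ F (s+(3*p-1)) = false
def Ub (p s : ℕ) : Prop :=
  F s = false ∧ (∀ k, k < 3*p-1 → F (s+k+p) = F (s+k)) ∧ F (s+(3*p-1)) = true

lemma corerun {p s : ℕ} (hp : 3 ≤ p) (hs : F s = false)
    (hcore : ∀ k, k ≤ 3*p-2 → F (s+k+p) = F (s+k)) :
    ∃ n0 q, 1 ≤ q ∧ q < p ∧ D n0 = s ∧ D (n0+q) = s+p ∧ D (n0+3*q) = s+3*p ∧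
      D (n0+(3*q-2)) + 3 ≤ s+3*p ∧ (∀ j, j < 3*q-1 → F (n0+q+j) = F (n0+j)) := by
  obtain ⟨n0, q, h1, h2, h3, h4, h5, h6⟩ := package hp hs hcore
  refine ⟨n0, q, h1, h2, h3, h4, h5, h6, ?_⟩
  refine (engine h3 h4 hcore (3*q-1) ?_).2
  intro j hj
  have hm : D (n0+j) ≤ D (n0+(3*q-2)) := D_mono (by omega)
  omega

theorem master : ∀ p, 1 ≤ p → ∀ x, ¬ Vtwo p x ∧ ¬ Vthree p x ∧ ¬ Ua p x ∧ ¬ Ub p x := by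
  intro p
  induction p using Nat.strong_induction_on with
  | _ p ih =>
  intro hp x
  rcases (by omega : p = 1 ∨ p = 2 ∨ 3 ≤ p) with rfl | hp2 | hp3
  · -- p = 1
    refine ⟨?_, ?_, ?_, ?_⟩
    · rintro ⟨hs, hpr⟩
      have h1 := hpr 0 (by omega)
      have h2 := hpr 1 (by omega)
      rw [show x+0+1 = x+1 from by omega, show x+0 = x from by omega] at h1
      rw [show x+1+1 = x+2 from by omega] at h2
      exact noaaa hs (h1.trans hs) (h2.trans (h1.trans hs))
    · rintro ⟨hs, hpr⟩
      have h1 := hpr 1 (by omega)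
      have h2 := hpr 2 (by omega)
      rw [show x+1+1 = x+2 from by omega] at h1
      rw [show x+2+1 = x+3 from by omega] at h2
      exact noaaa hs (h1.trans hs) (h2.trans (h1.trans hs))
    · rintro ⟨hs, hpr, _⟩
      have h1 := hpr 0 (by omega)
      have h2 := hpr 1 (by omega)
      rw [show x+0+1 = x+1 from by omega, show x+0 = x from by omega] at h1
      rw [show x+1+1 = x+2 from by omega] at h2
      exact noaaa hs (h1.trans hs) (h2.trans (h1.trans hs))
    · rintro ⟨hs, hpr, _⟩
      have h1 := hpr 0 (by omega)
      have h2 := hpr 1 (by omega)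
      rw [show x+0+1 = x+1 from by omega, show x+0 = x from by omega] at h1
      rw [show x+1+1 = x+2 from by omega] at h2
      exact noaaa hs (h1.trans hs) (h2.trans (h1.trans hs))
  · -- p = 2
    subst hp2
    have period2 : ∀ y, F y = false →
        (∀ k, k < 5 → F (y+k+2) = F (y+k)) → False := by
      intro y hy hpr
      have a0 : F (y+2) = false := by
        have h := hpr 0 (by omega)
        rw [show y+0+2 = y+2 from by omega, show y+0 = y from by omega] at h
        exact h.trans hy
      cases hX : F (y+1)
      · exact noaaa hy hX a0
      · have a1 : F (y+3) = true := by
          have h := hpr 1 (by omega)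
          rw [show y+1+2 = y+3 from by omega] at h
          exact h.trans hX
        have a3 : F (y+5) = true := by
          have h := hpr 3 (by omega)
          rw [show y+3+2 = y+5 from by omega] at h
          exact h.trans a1
        exact no_ababab hy hX a1 a3
    refine ⟨?_, ?_, ?_, ?_⟩
    · rintro ⟨hs, hpr⟩
      exact period2 x hs (fun k hk => hpr k (by omega))
    · rintro ⟨hs, hpr⟩
      refine period2 (x+1) hs ?_
      intro k hk
      have h := hpr (k+1) (by omega)
      rw [show x+(k+1)+2 = x+1+k+2 from by omega, show x+(k+1) = x+1+k from by omega] at h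
      exact h
    · rintro ⟨hs, hpr, _⟩
      exact period2 x hs (fun k hk => hpr k (by omega))
    · rintro ⟨hs, hpr, _⟩
      exact period2 x hs (fun k hk => hpr k (by omega))
  · -- 3 ≤ p
    refine ⟨?_, ?_, ?_, ?_⟩
    · -- Vtwo
      rintro ⟨hs, hpr⟩
      have hcore : ∀ k, k ≤ 3*p-2 → F (x+k+p) = F (x+k) := fun k hk => hpr k (by omega)
      have hcore' : ∀ k, k ≤ 3*p-1 → F (x+k+p) = F (x+k) := fun k hk => hpr k (by omega)
      obtain ⟨n0, q, hq1, hqp, hD0, hDq, hD3q, htop, hP⟩ := corerun hp3 hs hcore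
      cases hlam : F (x+(3*p-1))
      · -- top letter a
        obtain ⟨hBA, hF3⟩ := blockTopA (by omega) hq1 hD3q hlam
        cases hA : F n0
        · refine (ih q hqp hq1 n0).2.2.2 ⟨hA, ?_, hF3⟩
          intro k hk
          have h := hP k (by omega)
          rw [show n0+q+k = n0+k+q from by omega] at h
          exact h
        · -- noaaa contradiction
          have f1 : F (x+(2*p-1)) = false := by
            have h := hcore' (2*p-1) (by omega)
            rw [show x+(2*p-1)+p = x+(3*p-1) from by omega] at h
            rw [← h]; exact hlam
          have f2 : F (x+(p-1)) = false := by
            have h := hcore' (p-1) (by omega)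
            rw [show x+(p-1)+p = x+(2*p-1) from by omega] at h
            rw [← h]; exact f1
          have f3 : F (x+p) = false := by
            have h := hcore' 0 (by omega)
            rw [show x+0+p = x+p from by omega, show x+0 = x from by omega] at h
            exact h.trans hs
          have f4 : F (x+1) = false := F_s1 hD0 hA
          have f5 : F (x+p+1) = false := by
            have h := hcore' 1 (by omega)
            rw [show x+1+p = x+p+1 from by omega] at h
            exact h.trans f4
          refine noaaa (m := x+(p-1)) f2 ?_ ?_
          · rw [show x+(p-1)+1 = x+p from by omega]; exact f3
          · rw [show x+(p-1)+2 = x+p+1 from by omega]; exact f5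
      · -- top letter b
        obtain ⟨hBB, hF3⟩ := blockTopB (by omega) hq1 hD3q hlam
        have hP2 : ∀ j, j < 3*q → F (n0+q+j) = F (n0+j) := by
          refine (engine hD0 hDq hcore' (3*q) ?_).2
          intro j hj
          have hm : D (n0+j) ≤ D (n0+(3*q-1)) := D_mono (by omega)
          rw [hBB] at hm
          omega
        have hq_1 : F (n0+(q-1)) = false := by
          have t1 := hP2 (q-1) (by omega)
          have t2 := hP2 (2*q-1) (by omega)
          rw [show n0+q+(q-1) = n0+(2*q-1) from by omega] at t1
          rw [show n0+q+(2*q-1) = n0+(3*q-1) from by omega] at t2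
          rw [← t1, ← t2]
          exact hF3
        cases hA : F n0
        · refine (ih q hqp hq1 n0).1 ⟨hA, ?_⟩
          intro k hk
          have h := hP2 k hk
          rw [show n0+q+k = n0+k+q from by omega] at h
          exact h
        · have hpos := n0_pos hA
          have hprev : F (n0-1) = false := by
            apply not_b_succ
            rw [show n0-1+1 = n0 from by omega]
            exact hA
          refine (ih q hqp hq1 (n0-1)).1 ⟨hprev, ?_⟩
          intro k hk
          rcases Nat.eq_zero_or_pos k with rfl | hkpos
          · rw [show n0-1+0+q = n0+(q-1) from by omega, show n0-1+0 = n0-1 from by omega,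
                hq_1, hprev]
          · have h := hP2 (k-1) (by omega)
            rw [show n0+q+(k-1) = n0-1+k+q from by omega,
                show n0+(k-1) = n0-1+k from by omega] at h
            exact h
    · -- Vthree
      rintro ⟨hV, hpr⟩
      have hcore : ∀ k, k ≤ 3*p-2 → F ((x+1)+k+p) = F ((x+1)+k) := by
        intro k hk
        have h := hpr (k+1) (by omega)
        rw [show x+(k+1)+p = x+1+k+p from by omega, show x+(k+1) = x+1+k from by omega] at h
        exact h
      obtain ⟨n0, q, hq1, hqp, hD0, hDq, hD3q, htop, hP⟩ := corerun hp3 hV hcore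
      have hn0e : cnt (x+1) = n0 := by rw [← hD0, cnt_D]
      cases hc : F x
      · -- previous letter a : F (n0-1) = true = F (n0+(q-1))
        have hcx : cnt (x+1) = cnt x + 1 := cnt_succ_false hc
        have hpos : 1 ≤ n0 := by omega
        have hDprev : D (n0-1) = x := by
          have hD := D_cnt hc
          rw [show cnt x = n0-1 from by omega] at hD
          exact hD
        have fprev : F (n0-1) = true := F_true_of_D1 (by
          rw [show n0-1+1 = n0 from by omega, hD0, hDprev])
        have hFtp : F (x+p) = false := by
          have h := hpr 0 (by omega)
          rw [show x+0+p = x+p from by omega, show x+0 = x from by omega] at h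
          exact h.trans hc
        have hcnt_sp : cnt (x+1+p) = n0 + q := by rw [← hDq, cnt_D]
        have hcsp : cnt (x+p+1) = cnt (x+p) + 1 := cnt_succ_false hFtp
        have hcnt_tp : cnt (x+p) = n0+q-1 := by
          rw [show x+1+p = x+p+1 from by omega] at hcnt_sp
          omega
        have hDtp : D (n0+(q-1)) = x+p := by
          have hD := D_cnt hFtp
          rw [show cnt (x+p) = n0+(q-1) from by omega] at hD
          exact hD
        have fq1 : F (n0+(q-1)) = true := F_true_of_D1 (by
          rw [show n0+(q-1)+1 = n0+q from by omega, hDq, hDtp]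
          omega)
        cases hA : F n0
        · refine (ih q hqp hq1 (n0-1)).2.1 ⟨?_, ?_⟩
          · rw [show n0-1+1 = n0 from by omega]; exact hA
          · intro k hk
            rcases Nat.eq_zero_or_pos k with rfl | hkpos
            · rw [show n0-1+0+q = n0+(q-1) from by omega,
                  show n0-1+0 = n0-1 from by omega, fq1, fprev]
            · have h := hP (k-1) (by omega)
              rw [show n0+q+(k-1) = n0-1+k+q from by omega,
                  show n0+(k-1) = n0-1+k from by omega] at h
              exact h
        · exact absurd (nobb fprev (by rw [show n0-1+1 = n0 from by omega]; exact hA))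
            (by simp)
      · -- previous letter b : F (n0-1) = false = F (n0+(q-1))
        have hxpos : 1 ≤ x := n0_pos hc
        have hprevx : F (x-1) = false := not_b_succ (by
          rw [show x-1+1 = x from by omega]; exact hc)
        have hcx : cnt (x+1) = cnt x := cnt_succ_true hc
        have hcx1 : cnt x = cnt (x-1) + 1 := by
          have h := cnt_succ_false hprevx
          rw [show x-1+1 = x from by omega] at h
          exact h
        have hpos : 1 ≤ n0 := by omega
        have hDprev : D (n0-1) = x-1 := by
          have hD := D_cnt hprevx
          rw [show cnt (x-1) = n0-1 from by omega] at hD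
          exact hD
        have fprev : F (n0-1) = false := F_false_of_D2 (by
          rw [show n0-1+1 = n0 from by omega, hD0, hDprev]
          omega)
        have hFtp : F (x+p) = true := by
          have h := hpr 0 (by omega)
          rw [show x+0+p = x+p from by omega, show x+0 = x from by omega] at h
          exact h.trans hc
        have hftp1 : F (x+p-1) = false := not_b_succ (by
          rw [show x+p-1+1 = x+p from by omega]; exact hFtp)
        have hcnt_sp : cnt (x+1+p) = n0 + q := by rw [← hDq, cnt_D]
        have h1 : cnt (x+p+1) = cnt (x+p) := cnt_succ_true hFtp
        have h2 : cnt (x+p) = cnt (x+p-1) + 1 := by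
          have h := cnt_succ_false hftp1
          rw [show x+p-1+1 = x+p from by omega] at h
          exact h
        have hDtp : D (n0+(q-1)) = x+p-1 := by
          have hD := D_cnt hftp1
          rw [show x+1+p = x+p+1 from by omega] at hcnt_sp
          rw [show cnt (x+p-1) = n0+(q-1) from by omega] at hD
          exact hD
        have fq1 : F (n0+(q-1)) = false := F_false_of_D2 (by
          rw [show n0+(q-1)+1 = n0+q from by omega, hDq, hDtp]
          omega)
        cases hA : F n0
        · refine (ih q hqp hq1 (n0-1)).2.1 ⟨?_, ?_⟩
          · rw [show n0-1+1 = n0 from by omega]; exact hA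
          · intro k hk
            rcases Nat.eq_zero_or_pos k with rfl | hkpos
            · rw [show n0-1+0+q = n0+(q-1) from by omega,
                  show n0-1+0 = n0-1 from by omega, fq1, fprev]
            · have h := hP (k-1) (by omega)
              rw [show n0+q+(k-1) = n0-1+k+q from by omega,
                  show n0+(k-1) = n0-1+k from by omega] at h
              exact h
        · refine (ih q hqp hq1 (n0-1)).1 ⟨fprev, ?_⟩
          intro k hk
          rcases Nat.eq_zero_or_pos k with rfl | hkpos
          · rw [show n0-1+0+q = n0+(q-1) from by omega,
                show n0-1+0 = n0-1 from by omega, fq1, fprev]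
          · have h := hP (k-1) (by omega)
            rw [show n0+q+(k-1) = n0-1+k+q from by omega,
                show n0+(k-1) = n0-1+k from by omega] at h
            exact h
    · -- Ua
      rintro ⟨hs, hprU, hlam⟩
      have hcore : ∀ k, k ≤ 3*p-2 → F (x+k+p) = F (x+k) := fun k hk => hprU k (by omega)
      obtain ⟨n0, q, hq1, hqp, hD0, hDq, hD3q, htop, hP⟩ := corerun hp3 hs hcore
      obtain ⟨hBA, hF3⟩ := blockTopA (by omega) hq1 hD3q hlam
      cases hA : F n0
      · refine (ih q hqp hq1 n0).2.2.2 ⟨hA, ?_, hF3⟩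
        intro k hk
        have h := hP k (by omega)
        rw [show n0+q+k = n0+k+q from by omega] at h
        exact h
      · have f1 : F (x+(2*p-1)) = false := by
          have h := hprU (2*p-1) (by omega)
          rw [show x+(2*p-1)+p = x+(3*p-1) from by omega] at h
          rw [← h]; exact hlam
        have f2 : F (x+(p-1)) = false := by
          have h := hprU (p-1) (by omega)
          rw [show x+(p-1)+p = x+(2*p-1) from by omega] at h
          rw [← h]; exact f1
        have f3 : F (x+p) = false := by
          have h := hprU 0 (by omega)
          rw [show x+0+p = x+p from by omega, show x+0 = x from by omega] at h
          exact h.trans hs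
        have f4 : F (x+1) = false := F_s1 hD0 hA
        have f5 : F (x+p+1) = false := by
          have h := hprU 1 (by omega)
          rw [show x+1+p = x+p+1 from by omega] at h
          exact h.trans f4
        refine noaaa (m := x+(p-1)) f2 ?_ ?_
        · rw [show x+(p-1)+1 = x+p from by omega]; exact f3
        · rw [show x+(p-1)+2 = x+p+1 from by omega]; exact f5
    · -- Ub
      rintro ⟨hs, hprU, hlam⟩
      have hcore : ∀ k, k ≤ 3*p-2 → F (x+k+p) = F (x+k) := fun k hk => hprU k (by omega)
      obtain ⟨n0, q, hq1, hqp, hD0, hDq, hD3q, htop, hP⟩ := corerun hp3 hs hcore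
      obtain ⟨hBB, hF3⟩ := blockTopB (by omega) hq1 hD3q hlam
      have hq_1 : F (n0+(q-1)) = false := by
        have t1 := hP (q-1) (by omega)
        have t2 := hP (2*q-1) (by omega)
        rw [show n0+q+(q-1) = n0+(2*q-1) from by omega] at t1
        rw [show n0+q+(2*q-1) = n0+(3*q-1) from by omega] at t2
        rw [← t1, ← t2]
        exact hF3
      cases hA : F n0
      · refine (ih q hqp hq1 n0).2.2.1 ⟨hA, ?_, hF3⟩
        intro k hk
        have h := hP k (by omega)
        rw [show n0+q+k = n0+k+q from by omega] at h
        exact h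
      · have hpos := n0_pos hA
        have hprev : F (n0-1) = false := by
          apply not_b_succ
          rw [show n0-1+1 = n0 from by omega]
          exact hA
        refine (ih q hqp hq1 (n0-1)).1 ⟨hprev, ?_⟩
        intro k hk
        rcases Nat.eq_zero_or_pos k with rfl | hkpos
        · rw [show n0-1+0+q = n0+(q-1) from by omega, show n0-1+0 = n0-1 from by omega,
              hq_1, hprev]
        · have h := hP (k-1) (by omega)
          rw [show n0+q+(k-1) = n0-1+k+q from by omega,
              show n0+(k-1) = n0-1+k from by omega] at h
          exact h

end FW

section
open FW

/-- The Fibonacci word contains no fourth power. -/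
theorem stmt_11 (w : List Bool) (hw : w ≠ []) :
    ¬ IsFactorF (w ++ w ++ w ++ w) := by
  rintro ⟨m, hinf⟩
  set p := w.length with hp
  have hp1 : 1 ≤ p := by
    rcases w with _ | ⟨a, l⟩
    · exact absurd rfl hw
    · simp [hp]
  obtain ⟨u, v, huv⟩ := hinf
  set i := u.length with hi
  -- the fourth power as a list
  set W : List Bool := w ++ w ++ w ++ w with hW
  set W3 : List Bool := w ++ w ++ w with hW3
  have hW3len : W3.length = 3*p := by
    simp [hW3]; omega
  have hWlen : W.length = 4*p := by
    simp [hW]; omega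
  have hWright : W = w ++ W3 := by
    simp [hW, hW3, List.append_assoc]
  have hWleft : W = W3 ++ w := rfl
  have hlen : i + (4*p + v.length) = (fibF m).length := by
    rw [← huv]
    simp [hW]
    omega
  have hgetF : ∀ j, j < 4*p → F (i+j) = W.getD j false := by
    intro j hj
    have h1 : i + j < (fibF m).length := by omega
    have h2 : (fibF m).getD (i+j) false = F (i+j) := FW.F_eq h1
    rw [← h2, ← huv, List.append_assoc]
    rw [List.getD_append_right _ _ _ _ (by omega : u.length ≤ i + j)]
    rw [show i + j - u.length = j from by omega]
    rw [List.getD_append _ _ _ _ (by omega : j < W.length)]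
  have hWper : ∀ j, j + p < 4*p → W.getD (j+p) false = W.getD j false := by
    intro j hj
    have e1 : W.getD (j+p) false = W3.getD j false := by
      rw [hWright]
      rw [List.getD_append_right _ _ _ _ (by omega : w.length ≤ j + p)]
      rw [show j + p - w.length = j from by omega]
    have e2 : W.getD j false = W3.getD j false := by
      rw [hWleft]
      rw [List.getD_append _ _ _ _ (by omega : j < W3.length)]
    rw [e1, e2]
  have hFper : ∀ k, k < 3*p → F (i+k+p) = F (i+k) := by
    intro k hk
    have e1 : F (i+(k+p)) = W.getD (k+p) false := hgetF (k+p) (by omega)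
    have e2 : F (i+k) = W.getD k false := hgetF k (by omega)
    rw [show i+k+p = i+(k+p) from by omega, e1, e2]
    exact hWper k (by omega)
  cases hA : F (i)
  · exact (FW.master p hp1 i).1 ⟨hA, hFper⟩
  · have h1 : F (i+1) = false := FW.not_b_of_b hA
    exact (FW.master p hp1 i).2.1 ⟨h1, hFper⟩

end
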